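/- Let w = u·a·v·b·Sym(u)·b be an element of F_n with u·a the principal prefix of w, v ≠ λ, and let v = v₁·a·v₂ be a decomposition of v with v₁ and v₂ palindromes and u = v₂·(a·v)^t for some t ≥ 0. Then Sym(a·v₂) is a prefix of v₁ (in particular |v₁| ≥ |v₂| + 1). -/
import Mathlib


/-- The two-letter alphabet {a, b}. -/
inductive Letter : Type
  | a : Letter
  | b : Letter
deriving DecidableEq, BEq, Repr

/-- Words over the alphabet {a, b}. -/
abbrev Word := List Letter

/-- δ(w) = |w|_a − |w|_b. -/
def delta (w : Word) : ℤ := (w.count Letter.a : ℤ) - (w.count Letter.b : ℤ)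

/-- A Dyck word: δ(w) = 0 and δ(p) ≥ 0 for every prefix p of w. -/
def IsDyck (w : Word) : Prop := delta w = 0 ∧ ∀ p : Word, p <+: w → 0 ≤ delta p

/-- Membership in D_n: w = d·b with d a Dyck word of length 2n. -/
def InD (n : ℕ) (w : Word) : Prop :=
  ∃ d : Word, IsDyck d ∧ d.length = 2 * n ∧ w = d ++ [Letter.b]

/-- Exchanging the letters a and b. -/
def Letter.flip : Letter → Letter
  | .a => .b
  | .b => .a

/-- The complement w̄ of a word w. -/
def comp (w : Word) : Word := w.map Letter.flip

/-- Sym(w): the complement of the mirror (reversal) of w. -/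
def sym (w : Word) : Word := comp w.reverse

/-- A palindrome: a word equal to its mirror. -/
def Palindrome (w : Word) : Prop := w.reverse = w

/-- w' is a conjugate of w: w = u·v and w' = v·u. -/
def Conj (w w' : Word) : Prop := ∃ u v : Word, w = u ++ v ∧ w' = v ++ u

/-- u is the principal prefix of w: the shortest prefix of w with δ(u) maximal. -/
def IsPrincipalPrefix (u w : Word) : Prop :=
  u <+: w ∧ (∀ p : Word, p <+: w → delta p ≤ delta u) ∧
    (∀ p : Word, p <+: w → delta p = delta u → u.length ≤ p.length)

/-- The graph of the map γ: writing w = u·v·b with u the principal prefix of w,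
    γ(w) = v̄·b·ū. -/
def GammaRel (w w' : Word) : Prop :=
  ∃ u v : Word, IsPrincipalPrefix u w ∧ w = u ++ v ++ [Letter.b] ∧
    w' = comp v ++ [Letter.b] ++ comp u

/-- F_n: the fixed points of γ in D_n. -/
def InF (n : ℕ) (w : Word) : Prop := InD n w ∧ GammaRel w w

/-- F_γ = ⋃_{n ≥ 1} F_n. -/
def InFgamma (w : Word) : Prop := ∃ n : ℕ, 1 ≤ n ∧ InF n w

/-- x^y: concatenation of the word x with itself y times. -/
def wpow (x : Word) : ℕ → Word
  | 0 => []
  | k + 1 => x ++ wpow x k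

section Helpers

lemma delta_nil : delta ([] : Word) = 0 := by simp [delta]

lemma delta_append (x y : Word) : delta (x ++ y) = delta x + delta y := by
  simp [delta, List.count_append]; ring

lemma delta_a : delta [Letter.a] = 1 := by decide

lemma delta_b : delta [Letter.b] = -1 := by decide

lemma count_a_comp (x : Word) : (comp x).count Letter.a = x.count Letter.b := by
  induction x with
  | nil => rfl
  | cons l x ih =>
    have h : comp (l :: x) = Letter.flip l :: comp x := rfl
    rw [h]
    cases l <;> simp [List.count_cons, Letter.flip, ih] <;> decide

lemma count_b_comp (x : Word) : (comp x).count Letter.b = x.count Letter.a := by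
  induction x with
  | nil => rfl
  | cons l x ih =>
    have h : comp (l :: x) = Letter.flip l :: comp x := rfl
    rw [h]
    cases l <;> simp [List.count_cons, Letter.flip, ih] <;> decide

lemma delta_comp (x : Word) : delta (comp x) = -delta x := by
  simp [delta, count_a_comp, count_b_comp]

lemma comp_append (x y : Word) : comp (x ++ y) = comp x ++ comp y := by
  simp [comp]

lemma comp_comp (x : Word) : comp (comp x) = x := by
  simp [comp, List.map_map]
  have : Letter.flip ∘ Letter.flip = id := by funext l; cases l <;> rfl
  simp [this]

lemma comp_a : comp [Letter.a] = [Letter.b] := rfl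

lemma comp_b : comp [Letter.b] = [Letter.a] := rfl

lemma comp_sym (x : Word) : comp (sym x) = x.reverse := comp_comp _

lemma comp_reverse (x : Word) : comp x.reverse = (comp x).reverse := by
  simp [comp]

lemma length_comp (x : Word) : (comp x).length = x.length := by simp [comp]

lemma length_sym (x : Word) : (sym x).length = x.length := by simp [sym, length_comp]

lemma wpow_succ' (x : Word) (t : ℕ) : wpow x (t + 1) = wpow x t ++ x := by
  induction t with
  | zero => simp [wpow]
  | succ k ih =>
    calc wpow x (k + 1 + 1) = x ++ wpow x (k + 1) := rfl
      _ = x ++ (wpow x k ++ x) := by rw [ih]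
      _ = (x ++ wpow x k) ++ x := by simp [List.append_assoc]
      _ = wpow x (k + 1) ++ x := rfl

lemma reverse_wpow (x : Word) (t : ℕ) : (wpow x t).reverse = wpow x.reverse t := by
  induction t with
  | zero => rfl
  | succ k ih =>
    rw [show wpow x (k + 1) = x ++ wpow x k from rfl, List.reverse_append, ih, ← wpow_succ']

/-- Key word-combinatorial lemma: the equation `s·a·y = y·a·comp s` has no solution
    when every prefix of `s` has delta at least `delta y + 1` and `delta y ≤ -1`. -/
lemma lemB : ∀ (k : ℕ) (y s : Word), y.length ≤ k →
    s ++ [Letter.a] ++ y = y ++ [Letter.a] ++ comp s →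
    (∀ p : Word, p <+: s → delta y + 1 ≤ delta p) →
    delta y ≤ -1 → False := by
  intro k
  induction k with
  | zero =>
    intro y s hl heq hpos hneg
    have hy : y = [] := List.length_eq_zero_iff.mp (Nat.le_zero.mp hl)
    rw [hy, delta_nil] at hneg
    norm_num at hneg
  | succ k ih =>
    intro y s hl heq hpos hneg
    rcases le_or_gt y.length s.length with h | h
    · -- y is a prefix of s : contradiction with hpos
      have hyW : y <+: s ++ [Letter.a] ++ y := by
        rw [heq]; exact (List.prefix_append y _).trans (List.prefix_append _ _)
      have hsW : s <+: s ++ [Letter.a] ++ y :=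
        (List.prefix_append s _).trans (List.prefix_append _ _)
      have hys : y <+: s := List.prefix_of_prefix_length_le hyW hsW h
      have := hpos y hys
      linarith
    · -- s ++ [a] is a proper prefix of y
      have hsaW : s ++ [Letter.a] <+: y ++ [Letter.a] ++ comp s := by
        rw [← heq]; exact List.prefix_append _ _
      have hyW2 : y <+: y ++ [Letter.a] ++ comp s :=
        (List.prefix_append y _).trans (List.prefix_append _ _)
      have hsay : s ++ [Letter.a] <+: y :=
        List.prefix_of_prefix_length_le hsaW hyW2 (by simp; omega)
      obtain ⟨p, hp⟩ := hsay
      have hds : delta s = 0 := by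
        have h0 := congrArg delta heq
        simp only [delta_append, delta_a, delta_comp] at h0
        linarith
      have hdy : delta y = 1 + delta p := by
        rw [← hp]
        simp only [delta_append, delta_a, hds]
        ring
      have heq2 : s ++ [Letter.a] ++ p = p ++ [Letter.a] ++ comp s := by
        apply List.append_cancel_left (as := s ++ [Letter.a])
        have hy' : y = s ++ [Letter.a] ++ p := hp.symm
        calc (s ++ [Letter.a]) ++ (s ++ [Letter.a] ++ p)
            = s ++ [Letter.a] ++ y := by rw [hy']
          _ = y ++ [Letter.a] ++ comp s := heq
          _ = (s ++ [Letter.a]) ++ (p ++ [Letter.a] ++ comp s) := by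
              rw [hy']; simp [List.append_assoc]
      have hlp : p.length ≤ k := by
        have := congrArg List.length hp
        simp at this
        omega
      exact ih p s hlp heq2 (fun q hq => by have := hpos q hq; linarith) (by linarith)

end Helpers


/-- Remark 1: in the decomposition v = v₁·a·v₂ of Proposition (iv),
    Sym(a·v₂) is a prefix of v₁; in particular |v₁| ≥ |v₂| + 1. -/
theorem remark_sym_prefix (n : ℕ) (w u v v₁ v₂ : Word) (t : ℕ) (hw : InF n w)
    (hdec : w = u ++ [Letter.a] ++ v ++ [Letter.b] ++ sym u ++ [Letter.b])
    (hpp : IsPrincipalPrefix (u ++ [Letter.a]) w)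
    (hv : v ≠ [])
    (hv12 : v = v₁ ++ [Letter.a] ++ v₂)
    (hp1 : Palindrome v₁) (hp2 : Palindrome v₂)
    (hu : u = v₂ ++ wpow ([Letter.a] ++ v) t) :
    sym ([Letter.a] ++ v₂) <+: v₁ ∧ v₂.length + 1 ≤ v₁.length := by
  obtain ⟨⟨d, hdyck, hlen2, hwd⟩, hγ⟩ := hw
  obtain ⟨u', v', hpp', hw1, hw2⟩ := hγ
  have hp1' : v₁.reverse = v₁ := hp1
  have hp2' : v₂.reverse = v₂ := hp2
  -- uniqueness of the principal prefix
  have hdelta_eq : delta u' = delta (u ++ [Letter.a]) :=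
    le_antisymm (hpp.2.1 u' hpp'.1) (hpp'.2.1 _ hpp.1)
  have hlen_eq : u'.length = (u ++ [Letter.a]).length :=
    le_antisymm (hpp'.2.2 _ hpp.1 hdelta_eq.symm) (hpp.2.2 u' hpp'.1 hdelta_eq)
  have hu'eq : u' = u ++ [Letter.a] :=
    (List.prefix_of_prefix_length_le hpp'.1 hpp.1 (le_of_eq hlen_eq)).eq_of_length hlen_eq
  subst hu'eq
  -- identify v'
  have hv' : v' = v ++ [Letter.b] ++ sym u := by
    have h1 : (u ++ [Letter.a]) ++ (v' ++ [Letter.b]) =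
        (u ++ [Letter.a]) ++ ((v ++ [Letter.b] ++ sym u) ++ [Letter.b]) := by
      rw [← List.append_assoc, ← hw1, hdec]
      simp [List.append_assoc]
    exact List.append_cancel_right (List.append_cancel_left h1)
  subst hv'
  -- master equation
  have hQ : (u ++ [Letter.a] ++ v) ++ ([Letter.b] ++ sym u ++ [Letter.b]) =
      (comp v ++ [Letter.a] ++ u.reverse) ++ ([Letter.b] ++ comp u ++ [Letter.b]) := by
    have h := hdec.symm.trans hw2
    simp only [comp_append, comp_a, comp_b, comp_sym] at h
    simpa [List.append_assoc] using h
  have hM : u ++ [Letter.a] ++ v = comp v ++ [Letter.a] ++ u.reverse :=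
    (List.append_inj' hQ (by simp [length_sym, length_comp])).1
  -- reverse of u starts with v₂
  have hrr : ∃ rr : Word, u.reverse = v₂ ++ rr := by
    rcases t with _ | t'
    · exact ⟨[], by simp [hu, wpow, hp2']⟩
    · refine ⟨[Letter.a] ++ v₁ ++ [Letter.a] ++
        (wpow (([Letter.a] ++ v).reverse) t' ++ v₂), ?_⟩
      have hArev : ([Letter.a] ++ v).reverse = v₂ ++ [Letter.a] ++ v₁ ++ [Letter.a] := by
        rw [hv12]; simp [List.reverse_append, hp1', hp2', List.append_assoc]
      calc u.reverse = (v₂ ++ wpow ([Letter.a] ++ v) (t' + 1)).reverse := by rw [hu]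
        _ = (wpow ([Letter.a] ++ v) (t' + 1)).reverse ++ v₂ := by
            rw [List.reverse_append, hp2']
        _ = wpow (([Letter.a] ++ v).reverse) (t' + 1) ++ v₂ := by rw [reverse_wpow]
        _ = ([Letter.a] ++ v).reverse ++ wpow (([Letter.a] ++ v).reverse) t' ++ v₂ := rfl
        _ = v₂ ++ ([Letter.a] ++ v₁ ++ [Letter.a] ++
              (wpow (([Letter.a] ++ v).reverse) t' ++ v₂)) := by
            rw [hArev]; simp [List.append_assoc]
  obtain ⟨rr, hrr⟩ := hrr
  -- the key equation E0
  have hL : u ++ [Letter.a] ++ v =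
      (v₂ ++ [Letter.a] ++ v₁ ++ [Letter.a] ++ v₂) ++ wpow ([Letter.a] ++ v) t := by
    rw [hu]
    calc v₂ ++ wpow ([Letter.a] ++ v) t ++ [Letter.a] ++ v
        = v₂ ++ (wpow ([Letter.a] ++ v) t ++ ([Letter.a] ++ v)) := by
          simp [List.append_assoc]
      _ = v₂ ++ wpow ([Letter.a] ++ v) (t + 1) := by rw [← wpow_succ']
      _ = v₂ ++ (([Letter.a] ++ v) ++ wpow ([Letter.a] ++ v) t) := rfl
      _ = (v₂ ++ [Letter.a] ++ v₁ ++ [Letter.a] ++ v₂) ++ wpow ([Letter.a] ++ v) t := by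
          rw [hv12]; simp [List.append_assoc]
  have hR : comp v ++ [Letter.a] ++ u.reverse =
      (comp v₁ ++ [Letter.b] ++ comp v₂ ++ [Letter.a] ++ v₂) ++ rr := by
    rw [hrr, hv12, comp_append, comp_append, comp_a]
    simp [List.append_assoc]
  have hM2 : (v₂ ++ [Letter.a] ++ v₁ ++ [Letter.a] ++ v₂) ++ wpow ([Letter.a] ++ v) t =
      (comp v₁ ++ [Letter.b] ++ comp v₂ ++ [Letter.a] ++ v₂) ++ rr := by
    rw [← hL, ← hR]; exact hM
  have hE5 := (List.append_inj hM2 (by simp [length_comp]; omega)).1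
  have hE0 : v₂ ++ [Letter.a] ++ v₁ = comp v₁ ++ [Letter.b] ++ comp v₂ := by
    have h5' : (v₂ ++ [Letter.a] ++ v₁) ++ ([Letter.a] ++ v₂) =
        (comp v₁ ++ [Letter.b] ++ comp v₂) ++ ([Letter.a] ++ v₂) := by
      simpa [List.append_assoc] using hE5
    exact List.append_cancel_right h5'
  -- delta v₁ ≤ -1 from the principal-prefix property
  have hdv1 : delta v₁ ≤ -1 := by
    have hpre : u ++ [Letter.a] ++ v₁ ++ [Letter.a] <+: w := by
      refine ⟨v₂ ++ [Letter.b] ++ sym u ++ [Letter.b], ?_⟩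
      rw [hdec, hv12]; simp [List.append_assoc]
    have h := hpp.2.1 _ hpre
    simp only [delta_append, delta_a] at h
    linarith
  -- prefixes of v₂ have nonnegative delta (Dyck condition)
  have hpos2 : ∀ p : Word, p <+: v₂ → 0 ≤ delta p := by
    intro p hp
    apply hdyck.2
    have hd : d = u ++ [Letter.a] ++ v ++ [Letter.b] ++ sym u := by
      apply List.append_cancel_right (bs := [Letter.b])
      rw [← hwd, hdec]
    have hv₂u : v₂ <+: u := ⟨wpow ([Letter.a] ++ v) t, hu.symm⟩
    have hud : u <+: d := by
      rw [hd]
      exact (((List.prefix_append u [Letter.a]).trans (List.prefix_append _ v)).trans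
        (List.prefix_append _ [Letter.b])).trans (List.prefix_append _ (sym u))
    exact hp.trans (hv₂u.trans hud)
  -- |v₁| ≥ |v₂| + 1
  have hlen12 : v₂.length + 1 ≤ v₁.length := by
    by_contra hcon
    push_neg at hcon
    have hle : v₁.length ≤ v₂.length := by omega
    rcases eq_or_lt_of_le hle with heqL | hltL
    · have h9 : v₂ ++ ([Letter.a] ++ v₁) = comp v₁ ++ ([Letter.b] ++ comp v₂) := by
        simpa [List.append_assoc] using hE0
      have h10 := (List.append_inj h9 (by simp [length_comp]; omega)).2
      have hab : Letter.a = Letter.b := by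
        have := congrArg (fun l : Word => l.head?) h10
        simpa using this
      exact absurd hab (by decide)
    · have hpref : comp v₁ ++ [Letter.b] <+: v₂ := by
        have h1 : comp v₁ ++ [Letter.b] <+: v₂ ++ [Letter.a] ++ v₁ := by
          rw [hE0]; exact ⟨comp v₂, rfl⟩
        have h2 : v₂ <+: v₂ ++ [Letter.a] ++ v₁ :=
          (List.prefix_append v₂ _).trans (List.prefix_append _ _)
        exact List.prefix_of_prefix_length_le h1 h2 (by simp [length_comp]; omega)
      obtain ⟨s, hs⟩ := hpref
      have hcv2 : comp v₂ = v₁ ++ [Letter.a] ++ comp s := by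
        rw [← hs, comp_append, comp_append, comp_b, comp_comp]
      have hF : s ++ [Letter.a] ++ v₁ = v₁ ++ [Letter.a] ++ comp s := by
        apply List.append_cancel_left (as := comp v₁ ++ [Letter.b])
        calc (comp v₁ ++ [Letter.b]) ++ (s ++ [Letter.a] ++ v₁)
            = v₂ ++ [Letter.a] ++ v₁ := by rw [← hs]; simp [List.append_assoc]
          _ = comp v₁ ++ [Letter.b] ++ comp v₂ := hE0
          _ = (comp v₁ ++ [Letter.b]) ++ (v₁ ++ [Letter.a] ++ comp s) := by
              rw [hcv2]
      have hFpos : ∀ p : Word, p <+: s → delta v₁ + 1 ≤ delta p := by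
        intro p hps
        obtain ⟨q, hq⟩ := hps
        have hppre : comp v₁ ++ [Letter.b] ++ p <+: v₂ :=
          ⟨q, by rw [← hs, ← hq]; simp [List.append_assoc]⟩
        have := hpos2 _ hppre
        simp only [delta_append, delta_comp, delta_b] at this
        linarith
      exact lemB v₁.length v₁ s le_rfl hF hFpos hdv1
  -- extraction of the suffix of v₁, conversion to a prefix
  set m := v₁.length - (v₂.length + 1) with hm
  have htd : v₁.take m ++ v₁.drop m = v₁ := List.take_append_drop m v₁
  have h6 : (v₂ ++ [Letter.a] ++ v₁.take m) ++ v₁.drop m =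
      comp v₁ ++ ([Letter.b] ++ comp v₂) := by
    calc (v₂ ++ [Letter.a] ++ v₁.take m) ++ v₁.drop m
        = v₂ ++ [Letter.a] ++ v₁ := by rw [List.append_assoc, htd]
      _ = comp v₁ ++ [Letter.b] ++ comp v₂ := hE0
      _ = comp v₁ ++ ([Letter.b] ++ comp v₂) := by simp [List.append_assoc]
  have hdrop : v₁.drop m = [Letter.b] ++ comp v₂ :=
    (List.append_inj' h6 (by simp [length_comp]; omega)).2
  have hv₁eq : v₁ = v₁.take m ++ ([Letter.b] ++ comp v₂) := by rw [← hdrop, htd]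
  have hcprev : (comp v₂).reverse = comp v₂ := by rw [← comp_reverse, hp2']
  have hv₁eq2 : v₁ = (comp v₂ ++ [Letter.b]) ++ (v₁.take m).reverse := by
    calc v₁ = v₁.reverse := hp1'.symm
      _ = (v₁.take m ++ ([Letter.b] ++ comp v₂)).reverse := by rw [← hv₁eq]
      _ = (comp v₂ ++ [Letter.b]) ++ (v₁.take m).reverse := by
          simp [List.reverse_append, hcprev, List.append_assoc]
  have hsymval : sym ([Letter.a] ++ v₂) = comp v₂ ++ [Letter.b] := by
    simp [sym, List.reverse_append, hp2', comp_append, comp_a]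
  constructor
  · rw [hsymval]
    exact ⟨(v₁.take m).reverse, hv₁eq2.symm⟩
  · have hlz := congrArg List.length hv₁eq2
    simp [length_comp] at hlz
    omega
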